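/- Let π be a smooth bivector field on a manifold M, regarded as a bundle map π^♯ : T*M → TM, and for smooth functions f, g let {f,g} = π(df,dg). Then the Courant bracket [(π^♯df, df), (π^♯dg, dg)] equals (π^♯ d{f,g}, d{f,g}) for all smooth functions f, g if and only if the Jacobi identity {{f,g},h} + {{g,h},f} + {{h,f},g} = 0 holds for all smooth functions f, g, h. -/

import Mathlib

noncomputable section

variable {E : Type*} [NormedAddCommGroup E] [NormedSpace ℝ E]

/-- Lie bracket of vector fields. -/
def lieBracketVF (X Y : E → E) : E → E :=
  fun x => fderiv ℝ Y x (X x) - fderiv ℝ X x (Y x)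

/-- Exterior derivative of a 1-form `α`, as a function of a point and two vectors. -/
def dForm (α : E → (E →L[ℝ] ℝ)) : E → E → E → ℝ :=
  fun x u v => (fderiv ℝ α x u) v - (fderiv ℝ α x v) u

/-- The second (1-form) component of the Courant bracket
`[(X₁,α₁),(X₂,α₂)] = ([X₁,X₂], L_{X₁}α₂ − i_{X₂}dα₁)`, using Cartan's formula
`L_X = d ∘ i_X + i_X ∘ d`. -/
def courantForm (X₁ : E → E) (α₁ α₂ : E → (E →L[ℝ] ℝ)) (X₂ : E → E) : E → E → ℝ :=
  fun x v => fderiv ℝ (fun y => α₂ y (X₁ y)) x v + dForm α₂ x (X₁ x) v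
    - dForm α₁ x (X₂ x) v

/-- The canonical pairing of two sections of `TM ⊕ T*M`. -/
def pairingSec (X₁ : E → E) (α₁ : E → (E →L[ℝ] ℝ)) (X₂ : E → E)
    (α₂ : E → (E →L[ℝ] ℝ)) : E → ℝ :=
  fun x => (1/2) * (α₁ x (X₂ x) + α₂ x (X₁ x))

/-- The bracket `{f,g} = π(df, dg)` associated to a bivector field given by its
induced bundle map `π^♯ : T*M → TM`. -/
def poissonBracket (π : E → ((E →L[ℝ] ℝ) →L[ℝ] E)) (f g : E → ℝ) : E → ℝ :=
  fun x => fderiv ℝ g x (π x (fderiv ℝ f x))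

namespace Stmt17Aux

variable (π : E → ((E →L[ℝ] ℝ) →L[ℝ] E))

lemma top_add_one_le : (⊤ : ℕ∞) + 1 ≤ ⊤ := by simp

lemma smooth_dx {f : E → ℝ} (hf : ContDiff ℝ (⊤ : ℕ∞) f) :
    ContDiff ℝ (⊤ : ℕ∞) (fun y => fderiv ℝ f y) :=
  hf.fderiv_right (by simp)

lemma smooth_Xf (hπ : ContDiff ℝ (⊤ : ℕ∞) π) {f : E → ℝ} (hf : ContDiff ℝ (⊤ : ℕ∞) f) :
    ContDiff ℝ (⊤ : ℕ∞) (fun y => π y (fderiv ℝ f y)) :=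
  hπ.clm_apply (smooth_dx hf)

lemma smooth_pb (hπ : ContDiff ℝ (⊤ : ℕ∞) π) {f g : E → ℝ}
    (hf : ContDiff ℝ (⊤ : ℕ∞) f) (hg : ContDiff ℝ (⊤ : ℕ∞) g) :
    ContDiff ℝ (⊤ : ℕ∞) (poissonBracket π f g) :=
  (smooth_dx hg).clm_apply (smooth_Xf π hπ hf)

lemma pb_skew (hskew : ∀ (x : E) (α β : E →L[ℝ] ℝ), β (π x α) = - α (π x β))
    (f g : E → ℝ) (x : E) :
    poissonBracket π f g x = - poissonBracket π g f x :=
  hskew x (fderiv ℝ f x) (fderiv ℝ g x)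

/-- Product rule for applying a 1-form to a vector field. -/
lemma fderiv_apply_comb {α : E → (E →L[ℝ] ℝ)} {X : E → E} {x : E}
    (hα : DifferentiableAt ℝ α x) (hX : DifferentiableAt ℝ X x) (v : E) :
    fderiv ℝ (fun y => α y (X y)) x v
      = (fderiv ℝ α x v) (X x) + α x (fderiv ℝ X x v) := by
  rw [fderiv_clm_apply hα hX]
  simp [add_comm]

/-- Symmetry of the second derivative for a smooth function. -/
lemma sndSymm {h : E → ℝ} (hh : ContDiff ℝ (⊤ : ℕ∞) h) (x v w : E) :
    fderiv ℝ (fun y => fderiv ℝ h y) x v w = fderiv ℝ (fun y => fderiv ℝ h y) x w v := by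
  apply second_derivative_symmetric (f := h) (f' := fun y => fderiv ℝ h y)
  · exact fun y => (hh.differentiable (by simp) y).hasFDerivAt
  · exact ((smooth_dx hh).differentiable (by simp) x).hasFDerivAt

/-- Key identity: `{f,{g,h}} − {g,{f,h}} = dh([X_f, X_g])`. -/
lemma keyB (hπ : ContDiff ℝ (⊤ : ℕ∞) π) {f g h : E → ℝ}
    (hf : ContDiff ℝ (⊤ : ℕ∞) f) (hg : ContDiff ℝ (⊤ : ℕ∞) g) (hh : ContDiff ℝ (⊤ : ℕ∞) h) (x : E) :
    poissonBracket π f (poissonBracket π g h) x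
      - poissonBracket π g (poissonBracket π f h) x
      = fderiv ℝ h x (lieBracketVF (fun y => π y (fderiv ℝ f y))
          (fun y => π y (fderiv ℝ g y)) x) := by
  have hdh : DifferentiableAt ℝ (fun y => fderiv ℝ h y) x :=
    ((smooth_dx hh).differentiable (by simp) x)
  have hXf : DifferentiableAt ℝ (fun y => π y (fderiv ℝ f y)) x :=
    ((smooth_Xf π hπ hf).differentiable (by simp) x)
  have hXg : DifferentiableAt ℝ (fun y => π y (fderiv ℝ g y)) x :=
    ((smooth_Xf π hπ hg).differentiable (by simp) x)
  have e1 : poissonBracket π f (poissonBracket π g h) x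
      = fderiv ℝ (fun y => fderiv ℝ h y (π y (fderiv ℝ g y))) x
          (π x (fderiv ℝ f x)) := rfl
  have e2 : poissonBracket π g (poissonBracket π f h) x
      = fderiv ℝ (fun y => fderiv ℝ h y (π y (fderiv ℝ f y))) x
          (π x (fderiv ℝ g x)) := rfl
  rw [e1, e2, fderiv_apply_comb hdh hXg, fderiv_apply_comb hdh hXf,
    sndSymm hh x (π x (fderiv ℝ f x)) (π x (fderiv ℝ g x))]
  simp only [lieBracketVF, map_sub]
  ring

end Stmt17Aux

open Stmt17Aux in
theorem stmt17 (π : E → ((E →L[ℝ] ℝ) →L[ℝ] E)) (hπ : ContDiff ℝ (⊤ : ℕ∞) π)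
    (hskew : ∀ (x : E) (α β : E →L[ℝ] ℝ), β (π x α) = - α (π x β)) :
    (∀ f g : E → ℝ, ContDiff ℝ (⊤ : ℕ∞) f → ContDiff ℝ (⊤ : ℕ∞) g → ∀ x,
      (lieBracketVF (fun y => π y (fderiv ℝ f y)) (fun y => π y (fderiv ℝ g y)) x =
          π x (fderiv ℝ (poissonBracket π f g) x) ∧
        ∀ v, courantForm (fun y => π y (fderiv ℝ f y)) (fun y => fderiv ℝ f y)
            (fun y => fderiv ℝ g y) (fun y => π y (fderiv ℝ g y)) x v =
          fderiv ℝ (poissonBracket π f g) x v)) ↔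
    (∀ f g h : E → ℝ, ContDiff ℝ (⊤ : ℕ∞) f → ContDiff ℝ (⊤ : ℕ∞) g → ContDiff ℝ (⊤ : ℕ∞) h → ∀ x,
      poissonBracket π (poissonBracket π f g) h x
        + poissonBracket π (poissonBracket π g h) f x
        + poissonBracket π (poissonBracket π h f) g x = 0) := by
  constructor
  · intro H f g h hf hg hh x
    have hbr := (H f g hf hg x).1
    -- `{{f,g},h} = dh(X_{f,g}) = dh([X_f,X_g]) = {f,{g,h}} − {g,{f,h}}`
    have e1 : poissonBracket π (poissonBracket π f g) h x
        = fderiv ℝ h x (π x (fderiv ℝ (poissonBracket π f g) x)) := rfl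
    rw [e1, ← hbr, ← keyB π hπ hf hg hh x]
    have e2 : poissonBracket π (poissonBracket π g h) f x
        = - poissonBracket π f (poissonBracket π g h) x :=
      pb_skew π hskew _ _ x
    have e3 : poissonBracket π (poissonBracket π h f) g x
        = poissonBracket π g (poissonBracket π f h) x := by
      have hfun : poissonBracket π h f = fun y => - poissonBracket π f h y := by
        funext y; exact pb_skew π hskew h f y
      rw [hfun]
      show fderiv ℝ g x (π x (fderiv ℝ (fun y => - poissonBracket π f h y) x)) = _
      rw [fderiv_fun_neg]
      have : π x (-(fderiv ℝ (poissonBracket π f h) x))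
          = - π x (fderiv ℝ (poissonBracket π f h) x) := map_neg _ _
      rw [this, map_neg]
      exact (hskew x (fderiv ℝ g x) (fderiv ℝ (poissonBracket π f h) x)).symm
    rw [e2, e3]
    ring
  · intro H f g hf hg x
    constructor
    · -- vector component, via Hahn-Banach
      rw [← sub_eq_zero]
      apply NormedSpace.eq_zero_of_forall_dual_eq_zero ℝ
      intro ℓ
      have hℓ : ContDiff ℝ (⊤ : ℕ∞) (ℓ : E → ℝ) := ℓ.contDiff
      have hJ := H f g (ℓ : E → ℝ) hf hg hℓ x
      have hdℓ : ∀ y : E, fderiv ℝ (ℓ : E → ℝ) y = ℓ := fun y => ℓ.fderiv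
      -- rewrite the three Jacobi terms
      have t1 : poissonBracket π (poissonBracket π f g) (ℓ : E → ℝ) x
          = ℓ (π x (fderiv ℝ (poissonBracket π f g) x)) := by
        show fderiv ℝ (ℓ : E → ℝ) x _ = _
        rw [hdℓ]
      have t2 : poissonBracket π (poissonBracket π g (ℓ : E → ℝ)) f x
          = - poissonBracket π f (poissonBracket π g (ℓ : E → ℝ)) x :=
        pb_skew π hskew _ _ x
      have t3 : poissonBracket π (poissonBracket π (ℓ : E → ℝ) f) g x
          = poissonBracket π g (poissonBracket π f (ℓ : E → ℝ)) x := by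
        have hfun : poissonBracket π (ℓ : E → ℝ) f
            = fun y => - poissonBracket π f (ℓ : E → ℝ) y := by
          funext y; exact pb_skew π hskew _ _ y
        rw [hfun]
        show fderiv ℝ g x (π x (fderiv ℝ
            (fun y => - poissonBracket π f (ℓ : E → ℝ) y) x)) = _
        rw [fderiv_fun_neg]
        have : π x (-(fderiv ℝ (poissonBracket π f (ℓ : E → ℝ)) x))
            = - π x (fderiv ℝ (poissonBracket π f (ℓ : E → ℝ)) x) := map_neg _ _
        rw [this, map_neg]
        exact (hskew x (fderiv ℝ g x)
          (fderiv ℝ (poissonBracket π f (ℓ : E → ℝ)) x)).symm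
      rw [t1, t2, t3] at hJ
      have hK := keyB π hπ hf hg hℓ x
      rw [hdℓ] at hK
      -- hJ : ℓ (X_{f,g}) − {f,{g,ℓ}} + {g,{f,ℓ}} = 0 ; hK gives the lie bracket
      have : ℓ (π x (fderiv ℝ (poissonBracket π f g) x))
          = ℓ (lieBracketVF (fun y => π y (fderiv ℝ f y))
              (fun y => π y (fderiv ℝ g y)) x) := by
        rw [← hK]; linarith
      simp [map_sub, this]
    · -- form component: always true for exact forms
      intro v
      have hdf : dForm (fun y => fderiv ℝ f y) x (π x (fderiv ℝ g x)) v = 0 := by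
        simp [dForm, sndSymm hf x _ v]
      have hdg : dForm (fun y => fderiv ℝ g y) x (π x (fderiv ℝ f x)) v = 0 := by
        simp [dForm, sndSymm hg x _ v]
      show fderiv ℝ (fun y => fderiv ℝ g y (π y (fderiv ℝ f y))) x v
          + dForm (fun y => fderiv ℝ g y) x (π x (fderiv ℝ f x)) v
          - dForm (fun y => fderiv ℝ f y) x (π x (fderiv ℝ g x)) v = _
      rw [hdf, hdg, add_zero, sub_zero]
      rfl
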